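/- arXiv:2106.15201 — 2 statements merged into one kernel-verified Lean document; each statement's English description precedes it below -/
import Mathlib

section
/- For γ > 0 the function f^K_γ is differentiable on ℝ^{n_1×⋯×n_d}, and its Fréchet derivative at X applied to a direction H equals 2⟨Ŵ^K_{γ,X}(X), H⟩ (Frobenius inner product). Consequently, X ∈ L⁻¹(y) is a stationary point of f^K_γ restricted to L⁻¹(y) (i.e. the derivative of f^K_γ at X vanishes on ker L) if and only if Ŵ^K_{γ,X}(X) ⊥ ker(L), which holds if and only if X = X^K_W for the weights W^{(J)} = W^{(J)}_{γ,X}, J ∈ K. -/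
open scoped BigOperators
open Matrix

noncomputable section

abbrev TIdx (d : ℕ) (n : Fin d → ℕ) : Type := ∀ μ : Fin d, Fin (n μ)
abbrev Tensor (d : ℕ) (n : Fin d → ℕ) : Type := EuclideanSpace ℝ (TIdx d n)

def nS {d : ℕ} (n : Fin d → ℕ) (S : Finset (Fin d)) : ℕ := ∏ μ ∈ S, n μ

def mat {d : ℕ} (n : Fin d → ℕ) (X : Tensor d n) (J : Finset (Fin d)) :
    Matrix (∀ μ : {μ : Fin d // μ ∈ J}, Fin (n μ.1))
      (∀ μ : {μ : Fin d // μ ∉ J}, Fin (n μ.1)) ℝ :=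
  Matrix.of fun a b => X fun μ => if h : μ ∈ J then a ⟨μ, h⟩ else b ⟨μ, h⟩

def svalsSq {m k : Type*} [Fintype m] [Fintype k] [DecidableEq m]
    (A : Matrix m k ℝ) : ℕ → ℝ := fun i =>
  ((((Finset.univ.val.map
        (Matrix.isHermitian_mul_conjTranspose_self A).eigenvalues).sort (· ≤ ·)).reverse).getD i 0)

def svals {m k : Type*} [Fintype m] [Fintype k] [DecidableEq m]
    (A : Matrix m k ℝ) : ℕ → ℝ := fun i => Real.sqrt (svalsSq A i)

def minorDet {m k : Type*} [DecidableEq m] [DecidableEq k]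
    (A : Matrix m k ℝ) (s : ℕ) (I : Finset m) (J : Finset k) : ℝ :=
  if hI : I.card = s then
    if hJ : J.card = s then
      Matrix.det (Matrix.of fun a b : Fin s =>
        A ((I.equivFinOfCardEq hI).symm a).1 ((J.equivFinOfCardEq hJ).symm b).1)
    else 0
  else 0

def detSq {m k : Type*} [Fintype m] [Fintype k] [DecidableEq m] [DecidableEq k]
    (A : Matrix m k ℝ) (s : ℕ) : ℝ :=
  ∑ I ∈ Finset.powersetCard s (Finset.univ : Finset m),
    ∑ J ∈ Finset.powersetCard s (Finset.univ : Finset k), (minorDet A s I J) ^ 2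

def fK {d : ℕ} (n : Fin d → ℕ) (𝒥 : Finset (Finset (Fin d))) (γ : ℝ) (X : Tensor d n) : ℝ :=
  Real.log (∏ J ∈ 𝒥, (mat n X J * (mat n X J)ᴴ + γ • 1).det)

def wmat {d : ℕ} (n : Fin d → ℕ) (γ : ℝ) (Xw : Tensor d n) (J : Finset (Fin d)) :=
  (mat n Xw J * (mat n Xw J)ᴴ + γ • (1 : Matrix _ _ ℝ))⁻¹

def Q {d : ℕ} (n : Fin d → ℕ) (𝒥 : Finset (Finset (Fin d))) (γ : ℝ) (Xw X' : Tensor d n) : ℝ :=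
  ∑ J ∈ 𝒥, ((mat n X' J)ᴴ * wmat n γ Xw J * mat n X' J).trace

def KS {d : ℕ} (K S : Finset (Finset (Fin d))) : Finset (Finset (Fin d)) :=
  (K \ S) ∪ S.image (·ᶜ)

def unmat {d : ℕ} (n : Fin d → ℕ) (J : Finset (Fin d))
    (A : Matrix (∀ μ : {μ : Fin d // μ ∈ J}, Fin (n μ.1))
      (∀ μ : {μ : Fin d // μ ∉ J}, Fin (n μ.1)) ℝ) : Tensor d n :=
  WithLp.toLp 2 fun idx => A (fun μ => idx μ.1) (fun μ => idx μ.1)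

def Wop {d : ℕ} (n : Fin d → ℕ) (K : Finset (Finset (Fin d))) (γ : ℝ)
    (Xw X' : Tensor d n) : Tensor d n :=
  ∑ J ∈ K, unmat n J (wmat n γ Xw J * mat n X' J)

noncomputable section AuxDev

abbrev Rows {d : ℕ} (n : Fin d → ℕ) (J : Finset (Fin d)) : Type :=
  ∀ μ : {μ : Fin d // μ ∈ J}, Fin (n μ.1)
abbrev Cols {d : ℕ} (n : Fin d → ℕ) (J : Finset (Fin d)) : Type :=
  ∀ μ : {μ : Fin d // μ ∉ J}, Fin (n μ.1)

def detCML (m : Type*) [Fintype m] [DecidableEq m] :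
    ContinuousMultilinearMap ℝ (fun _ : m => (m → ℝ)) ℝ :=
  MultilinearMap.mkContinuous
    (Matrix.detRowAlternating : ((m → ℝ) [⋀^m]→ₗ[ℝ] ℝ)).toMultilinearMap
    (Nat.factorial (Fintype.card m)) <| by
  intro A
  calc ‖Matrix.detRowAlternating (R := ℝ) (Matrix.of A)‖
      = |Matrix.det (Matrix.of A)| := rfl
    _ ≤ ∑ σ : Equiv.Perm m, |(Equiv.Perm.sign σ : ℤ) • ∏ i, (Matrix.of A) (σ i) i| := by
        rw [Matrix.det_apply]; exact Finset.abs_sum_le_sum_abs _ _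
    _ ≤ ∑ _σ : Equiv.Perm m, ∏ i, ‖A i‖ := by
        refine Finset.sum_le_sum fun σ _ => ?_
        rw [abs_zsmul]
        rcases Int.isUnit_iff.1 (Equiv.Perm.sign σ).isUnit with h | h <;>
          rw [h] <;> simp only [abs_one, abs_neg, one_smul]
        all_goals
        calc |∏ i, (Matrix.of A) (σ i) i| = ∏ i, |A (σ i) i| := Finset.abs_prod _ _
          _ ≤ ∏ i, ‖A (σ i)‖ := Finset.prod_le_prod (fun i _ => abs_nonneg _)
              (fun i _ => norm_le_pi_norm (A (σ i)) i)
          _ = ∏ i, ‖A i‖ := Equiv.prod_comp σ (fun i => ‖A i‖)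
    _ = (Nat.factorial (Fintype.card m)) * ∏ i, ‖A i‖ := by
        rw [Finset.sum_const, Finset.card_univ]
        simp [Fintype.card_perm, nsmul_eq_mul]

theorem linearDeriv_detCML {m : Type*} [Fintype m] [DecidableEq m] (B C : Matrix m m ℝ) :
    (detCML m).linearDeriv B C = ((Matrix.adjugate B) * C).trace := by
  erw [ContinuousMultilinearMap.linearDeriv_apply]
  have h1 : ∀ i : m, (detCML m) (Function.update B i (C i)) =
      ∑ j, C i j * Matrix.adjugate B j i := by
    intro i
    have hc : C i = ∑ j, C i j • (Pi.single j (1:ℝ) : m → ℝ) := by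
      funext j; simp [Pi.single_apply, Finset.sum_ite_eq']
    rw [← ContinuousMultilinearMap.coe_coe]
    conv_lhs => rw [hc]
    erw [MultilinearMap.map_update_sum]
    refine Finset.sum_congr rfl fun j _ => ?_
    erw [MultilinearMap.map_update_smul]
    have h2 : (detCML m).toMultilinearMap (Function.update B i (Pi.single j (1:ℝ)))
        = (B.updateRow i (Pi.single j 1)).det := rfl
    rw [h2, ← Matrix.adjugate_apply]
    simp
  simp_rw [h1, Matrix.trace, Matrix.diag, Matrix.mul_apply]
  rw [Finset.sum_comm]
  exact Finset.sum_congr rfl fun i _ => Finset.sum_congr rfl fun j _ => mul_comm _ _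

variable {d : ℕ} {n : Fin d → ℕ}

def splitEquiv (n : Fin d → ℕ) (J : Finset (Fin d)) : TIdx d n ≃ Rows n J × Cols n J where
  toFun idx := (fun μ => idx μ.1, fun μ => idx μ.1)
  invFun p μ := if h : μ ∈ J then p.1 ⟨μ, h⟩ else p.2 ⟨μ, h⟩
  left_inv idx := by funext μ; by_cases h : μ ∈ J <;> simp [h]
  right_inv p := by
    refine Prod.ext ?_ ?_
    · funext μ; exact dif_pos μ.2
    · funext μ; exact dif_neg μ.2

theorem mat_apply_split (X : Tensor d n) (J : Finset (Fin d)) (a : Rows n J) (b : Cols n J) :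
    mat n X J a b = X ((splitEquiv n J).symm (a, b)) := rfl

theorem unmat_symm_apply (J : Finset (Fin d)) (A : Matrix (Rows n J) (Cols n J) ℝ)
    (a : Rows n J) (b : Cols n J) :
    unmat n J A ((splitEquiv n J).symm (a, b)) = A a b := by
  show A (fun μ => ((splitEquiv n J).symm (a, b)) μ.1) (fun μ => ((splitEquiv n J).symm (a, b)) μ.1) = A a b
  congr 1
  · funext μ; exact dif_pos μ.2
  · funext μ; exact dif_neg μ.2

theorem inner_unmat (J : Finset (Fin d)) (A : Matrix (Rows n J) (Cols n J) ℝ) (H : Tensor d n) :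
    (inner ℝ (unmat n J A) H : ℝ) = ((mat n H J)ᴴ * A).trace := by
  have h0 : (inner ℝ (unmat n J A) H : ℝ) = ∑ idx : TIdx d n, unmat n J A idx * H idx := by
    simp [PiLp.inner_apply, RCLike.inner_apply, mul_comm]
  rw [h0, ← Equiv.sum_comp (splitEquiv n J).symm
    (fun idx => unmat n J A idx * H idx), Fintype.sum_prod_type]
  rw [Matrix.trace]
  rw [Finset.sum_comm]
  refine Finset.sum_congr rfl fun b _ => ?_
  rw [Matrix.diag, Matrix.mul_apply]
  refine Finset.sum_congr rfl fun a _ => ?_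
  rw [unmat_symm_apply, Matrix.conjTranspose_apply]
  rw [show H ((splitEquiv n J).symm (a, b)) = mat n H J a b from rfl]
  simp [mul_comm]

end AuxDev
noncomputable section AuxDev2
variable {d : ℕ} {n : Fin d → ℕ}

def AJ (n : Fin d → ℕ) (γ : ℝ) (X : Tensor d n) (J : Finset (Fin d)) :
    Matrix (Rows n J) (Rows n J) ℝ :=
  mat n X J * (mat n X J)ᴴ + γ • 1

theorem AJ_posDef (γ : ℝ) (hγ : 0 < γ) (X : Tensor d n) (J : Finset (Fin d)) :
    (AJ n γ X J).PosDef := by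
  refine Matrix.PosDef.posSemidef_add (Matrix.posSemidef_self_mul_conjTranspose _) ?_
  rw [Matrix.smul_one_eq_diagonal]
  exact Matrix.posDef_diagonal_iff.2 fun _ => hγ

theorem wmat_eq (γ : ℝ) (X : Tensor d n) (J : Finset (Fin d)) :
    wmat n γ X J = (AJ n γ X J)⁻¹ := rfl

theorem wmat_posDef (γ : ℝ) (hγ : 0 < γ) (X : Tensor d n) (J : Finset (Fin d)) :
    (wmat n γ X J).PosDef :=
  (AJ_posDef γ hγ X J).inv

theorem wmat_herm (γ : ℝ) (hγ : 0 < γ) (X : Tensor d n) (J : Finset (Fin d)) :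
    (wmat n γ X J)ᴴ = wmat n γ X J :=
  (wmat_posDef γ hγ X J).isHermitian

/-- trace identity -/
theorem trace_sym {m k : Type*} [Fintype m] [Fintype k]
    (W : Matrix m m ℝ) (hW : Wᴴ = W) (M N : Matrix m k ℝ) :
    (W * (M * Nᴴ)).trace = (Nᴴ * (W * M)).trace := by
  calc (W * (M * Nᴴ)).trace = ((M * Nᴴ) * W).trace := Matrix.trace_mul_comm _ _
    _ = (M * (Nᴴ * W)).trace := by rw [Matrix.mul_assoc]
    _ = ((Nᴴ * W) * M).trace := Matrix.trace_mul_comm _ _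
    _ = (Nᴴ * (W * M)).trace := by rw [Matrix.mul_assoc]

theorem trace_sym' {m k : Type*} [Fintype m] [Fintype k]
    (W : Matrix m m ℝ) (hW : Wᴴ = W) (M N : Matrix m k ℝ) :
    (W * (N * Mᴴ)).trace = (Nᴴ * (W * M)).trace := by
  have h1 : (W * (N * Mᴴ)).trace = ((W * (N * Mᴴ))ᴴ).trace := by
    rw [Matrix.trace_conjTranspose]; exact (star_trivial _).symm
  rw [h1]
  have h2 : (W * (N * Mᴴ))ᴴ = (M * Nᴴ) * W := by
    rw [Matrix.conjTranspose_mul, Matrix.conjTranspose_mul, Matrix.conjTranspose_conjTranspose,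
      hW]
  rw [h2, Matrix.trace_mul_comm, trace_sym W hW M N]

theorem inner_Wop (K : Finset (Finset (Fin d))) (γ : ℝ) (X Y H : Tensor d n) :
    (inner ℝ (Wop n K γ X Y) H : ℝ) =
      ∑ J ∈ K, ((mat n H J)ᴴ * (wmat n γ X J * mat n Y J)).trace := by
  rw [Wop, sum_inner]
  exact Finset.sum_congr rfl fun J _ => inner_unmat J _ H

end AuxDev2
noncomputable section AuxDev3
variable {d : ℕ} {n : Fin d → ℕ}

def eidx (n : Fin d → ℕ) (J : Finset (Fin d)) (a : Rows n J) (b : Cols n J) : TIdx d n :=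
  (splitEquiv n J).symm (a, b)

def DmatCLM (n : Fin d → ℕ) (J : Finset (Fin d)) (X : Tensor d n) :
    Tensor d n →L[ℝ] (Rows n J → Rows n J → ℝ) :=
  ContinuousLinearMap.pi fun a => ContinuousLinearMap.pi fun b =>
    ∑ c : Cols n J, ((mat n X J a c) • EuclideanSpace.proj (𝕜 := ℝ) (eidx n J b c)
      + (mat n X J b c) • EuclideanSpace.proj (𝕜 := ℝ) (eidx n J a c))

def AJfun (n : Fin d → ℕ) (γ : ℝ) (X : Tensor d n) (J : Finset (Fin d)) :
    Rows n J → Rows n J → ℝ :=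
  fun a b => AJ n γ X J a b

theorem hasFDerivAt_AJfun (γ : ℝ) (X : Tensor d n) (J : Finset (Fin d)) :
    HasFDerivAt (fun X' => AJfun n γ X' J) (DmatCLM n J X) X := by
  rw [DmatCLM, hasFDerivAt_pi]
  intro a
  rw [hasFDerivAt_pi]
  intro b
  have heq : (fun X' => AJfun n γ X' J a b)
      = fun X' : Tensor d n => (∑ c : Cols n J, X' (eidx n J a c) * X' (eidx n J b c))
          + γ * (1 : Matrix (Rows n J) (Rows n J) ℝ) a b := by
    funext X'
    simp only [AJfun, AJ, Matrix.add_apply, Matrix.mul_apply, Matrix.conjTranspose_apply,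
      Matrix.smul_apply, smul_eq_mul]
    rfl
  rw [heq]
  refine HasFDerivAt.add_const _ ?_
  refine HasFDerivAt.fun_sum fun c _ => ?_
  have h1 : HasFDerivAt (fun X' : Tensor d n => X' (eidx n J a c))
      (EuclideanSpace.proj (𝕜 := ℝ) (eidx n J a c)) X := (EuclideanSpace.proj (𝕜 := ℝ) (eidx n J a c)).hasFDerivAt
  have h2 : HasFDerivAt (fun X' : Tensor d n => X' (eidx n J b c))
      (EuclideanSpace.proj (𝕜 := ℝ) (eidx n J b c)) X := (EuclideanSpace.proj (𝕜 := ℝ) (eidx n J b c)).hasFDerivAt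
  exact h1.mul h2

theorem hasFDerivAt_detAJ (γ : ℝ) (X : Tensor d n) (J : Finset (Fin d)) :
    HasFDerivAt (fun X' => (AJ n γ X' J).det)
      (((detCML (Rows n J)).linearDeriv (AJfun n γ X J)).comp (DmatCLM n J X)) X :=
  ((detCML (Rows n J)).hasFDerivAt (AJfun n γ X J)).comp X (hasFDerivAt_AJfun γ X J)

def DfK (n : Fin d → ℕ) (K : Finset (Finset (Fin d))) (γ : ℝ) (X : Tensor d n) :
    Tensor d n →L[ℝ] ℝ :=
  ∑ J ∈ K, ((AJ n γ X J).det)⁻¹ •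
    (((detCML (Rows n J)).linearDeriv (AJfun n γ X J)).comp (DmatCLM n J X))

theorem hasFDerivAt_fK (K : Finset (Finset (Fin d))) (γ : ℝ) (hγ : 0 < γ) (X : Tensor d n) :
    HasFDerivAt (fK n K γ) (DfK n K γ X) X := by
  have hre : fK n K γ = fun X' => ∑ J ∈ K, Real.log ((AJ n γ X' J).det) := by
    funext X'
    rw [fK, Real.log_prod]
    · rfl
    · exact fun J _ => (AJ_posDef γ hγ X' J).det_pos.ne'
  rw [hre, DfK]
  exact HasFDerivAt.fun_sum fun J _ =>
    (hasFDerivAt_detAJ γ X J).log (AJ_posDef γ hγ X J).det_pos.ne'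

theorem DmatCLM_eq (J : Finset (Fin d)) (X H : Tensor d n) :
    Matrix.of (DmatCLM n J X H)
      = mat n H J * (mat n X J)ᴴ + mat n X J * (mat n H J)ᴴ := by
  ext a b
  simp only [Matrix.of_apply, DmatCLM, ContinuousLinearMap.pi_apply,
    ContinuousLinearMap.sum_apply, ContinuousLinearMap.add_apply,
    ContinuousLinearMap.smul_apply, PiLp.proj_apply, smul_eq_mul,
    Matrix.add_apply, Matrix.mul_apply, Matrix.conjTranspose_apply, star_trivial]
  rw [← Finset.sum_add_distrib]
  refine Finset.sum_congr rfl fun c _ => ?_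
  rw [show H (eidx n J b c) = mat n H J b c from rfl,
      show H (eidx n J a c) = mat n H J a c from rfl]
  ring

theorem DfK_apply (K : Finset (Finset (Fin d))) (γ : ℝ) (hγ : 0 < γ) (X H : Tensor d n) :
    DfK n K γ X H = 2 * (inner ℝ (Wop n K γ X X) H : ℝ) := by
  rw [inner_Wop, DfK, ContinuousLinearMap.sum_apply, Finset.mul_sum]
  refine Finset.sum_congr rfl fun J _ => ?_
  rw [ContinuousLinearMap.smul_apply, ContinuousLinearMap.comp_apply, smul_eq_mul]
  have h1 : ((detCML (Rows n J)).linearDeriv (AJfun n γ X J)) (DmatCLM n J X H)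
      = ((Matrix.adjugate (AJ n γ X J)) * Matrix.of (DmatCLM n J X H)).trace :=
    linearDeriv_detCML (AJ n γ X J) (Matrix.of (DmatCLM n J X H))
  rw [h1]
  have hdet := (AJ_posDef γ hγ X J).det_pos
  have h2 : ((AJ n γ X J).det)⁻¹ *
      ((Matrix.adjugate (AJ n γ X J)) * Matrix.of (DmatCLM n J X H)).trace
      = ((wmat n γ X J) * Matrix.of (DmatCLM n J X H)).trace := by
    rw [wmat_eq, Matrix.inv_def, Ring.inverse_eq_inv, Matrix.smul_mul, Matrix.trace_smul,
      smul_eq_mul]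
  rw [h2, DmatCLM_eq, Matrix.mul_add, Matrix.trace_add]
  have hW := wmat_herm γ hγ X J
  rw [show wmat n γ X J * (mat n H J * (mat n X J)ᴴ)
      = wmat n γ X J * (mat n H J * (mat n X J)ᴴ) from rfl]
  rw [trace_sym' (wmat n γ X J) hW (mat n X J) (mat n H J),
      trace_sym (wmat n γ X J) hW (mat n X J) (mat n H J)]
  ring

end AuxDev3
noncomputable section AuxDev4
variable {d : ℕ} {n : Fin d → ℕ}

theorem psd_trace_nonneg {m : Type*} [Fintype m] [DecidableEq m] {A : Matrix m m ℝ}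
    (hA : A.PosSemidef) : 0 ≤ A.trace := by
  rw [Matrix.trace]
  refine Finset.sum_nonneg fun i _ => ?_
  exact hA.diag_nonneg

theorem mat_add (X Y : Tensor d n) (J : Finset (Fin d)) :
    mat n (X + Y) J = mat n X J + mat n Y J := rfl

theorem mat_smul (t : ℝ) (X : Tensor d n) (J : Finset (Fin d)) :
    mat n (t • X) J = t • mat n X J := rfl

theorem Q_nonneg (K : Finset (Finset (Fin d))) (γ : ℝ) (hγ : 0 < γ) (Xw X' : Tensor d n) :
    0 ≤ Q n K γ Xw X' := by
  rw [Q]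
  refine Finset.sum_nonneg fun J _ => psd_trace_nonneg ?_
  exact (wmat_posDef γ hγ Xw J).posSemidef.conjTranspose_mul_mul_same (mat n X' J)

theorem Q_expand (K : Finset (Finset (Fin d))) (γ : ℝ) (hγ : 0 < γ) (Xw Y k : Tensor d n) :
    Q n K γ Xw (Y + k) = Q n K γ Xw Y + 2 * (inner ℝ (Wop n K γ Xw Y) k : ℝ) + Q n K γ Xw k := by
  rw [inner_Wop, Q, Q, Q, Finset.mul_sum, ← Finset.sum_add_distrib, ← Finset.sum_add_distrib]
  refine Finset.sum_congr rfl fun J _ => ?_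
  set M := mat n Y J
  set N := mat n k J
  set W := wmat n γ Xw J
  have hW : Wᴴ = W := wmat_herm γ hγ Xw J
  rw [mat_add]
  have hcross : (Mᴴ * W * N).trace = (Nᴴ * W * M).trace := by
    have h1 : (Mᴴ * W * N).trace = ((Mᴴ * W * N)ᴴ).trace := by
      rw [Matrix.trace_conjTranspose]; exact (star_trivial _).symm
    rw [h1, Matrix.conjTranspose_mul, Matrix.conjTranspose_mul,
      Matrix.conjTranspose_conjTranspose, hW, Matrix.mul_assoc]
  have hexp : ((M + N)ᴴ * W * (M + N)).trace
      = (Mᴴ * W * M).trace + ((Mᴴ * W * N).trace + (Nᴴ * W * M).trace)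
        + (Nᴴ * W * N).trace := by
    rw [Matrix.conjTranspose_add, Matrix.add_mul, Matrix.add_mul, Matrix.mul_add,
      Matrix.mul_add, Matrix.trace_add, Matrix.trace_add, Matrix.trace_add]
    ring
  rw [hexp, hcross]
  have : (Nᴴ * (W * M)).trace = (Nᴴ * W * M).trace := by rw [Matrix.mul_assoc]
  rw [this]
  ring

theorem Q_smul (K : Finset (Finset (Fin d))) (γ : ℝ) (Xw : Tensor d n) (t : ℝ)
    (k : Tensor d n) : Q n K γ Xw (t • k) = t ^ 2 * Q n K γ Xw k := by
  rw [Q, Q, Finset.mul_sum]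
  refine Finset.sum_congr rfl fun J _ => ?_
  rw [mat_smul, Matrix.conjTranspose_smul, Matrix.smul_mul, Matrix.smul_mul, Matrix.mul_smul,
    Matrix.trace_smul, Matrix.trace_smul]
  simp [star_trivial, smul_eq_mul]
  ring

end AuxDev4

/-- for `γ > 0`, `f^K_γ` is differentiable with Fréchet derivative
`H ↦ 2⟨Ŵ^K_{γ,X}(X), H⟩`; consequently a feasible `X` is a stationary point of
`f^K_γ` restricted to `L⁻¹(y)` iff `Ŵ^K_{γ,X}(X) ⊥ ker L`, iff `X` equals the
weighted least squares minimizer `X^K_W` for the weights `W^{(J)} = W^{(J)}_{γ,X}`. -/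
theorem fK_fderiv_and_stationary {d ℓ : ℕ} (n : Fin d → ℕ) (K : Finset (Finset (Fin d)))
    (hK : ∀ J ∈ K, J.Nonempty ∧ J ≠ Finset.univ)
    (γ : ℝ) (hγ : 0 < γ)
    (L : Tensor d n →ₗ[ℝ] EuclideanSpace ℝ (Fin ℓ)) (hL : Function.Surjective L)
    (hld : ℓ < ∏ μ, n μ) (y : EuclideanSpace ℝ (Fin ℓ)) :
    (∀ X : Tensor d n,
      DifferentiableAt ℝ (fK n K γ) X ∧
      ∀ H : Tensor d n, fderiv ℝ (fK n K γ) X H = 2 * (inner ℝ (Wop n K γ X X) H : ℝ)) ∧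
    (∀ X : Tensor d n, L X = y →
      (((∀ k : Tensor d n, L k = 0 → fderiv ℝ (fK n K γ) X k = 0) ↔
          (∀ k : Tensor d n, L k = 0 → (inner ℝ (Wop n K γ X X) k : ℝ) = 0)) ∧
       ((∀ k : Tensor d n, L k = 0 → fderiv ℝ (fK n K γ) X k = 0) ↔
          (∀ X' : Tensor d n, L X' = y → Q n K γ X X ≤ Q n K γ X X')))) := by
  have main : ∀ X : Tensor d n, DifferentiableAt ℝ (fK n K γ) X ∧
      ∀ H : Tensor d n, fderiv ℝ (fK n K γ) X H = 2 * (inner ℝ (Wop n K γ X X) H : ℝ) := by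
    intro X
    have h := hasFDerivAt_fK K γ hγ X
    exact ⟨h.differentiableAt, fun H => by rw [h.fderiv]; exact DfK_apply K γ hγ X H⟩
  refine ⟨main, ?_⟩
  intro X hX
  have hiff1 : (∀ k : Tensor d n, L k = 0 → fderiv ℝ (fK n K γ) X k = 0) ↔
      (∀ k : Tensor d n, L k = 0 → (inner ℝ (Wop n K γ X X) k : ℝ) = 0) := by
    constructor
    · intro h k hk
      have h2 := h k hk
      rw [(main X).2 k] at h2
      linarith
    · intro h k hk
      rw [(main X).2 k, h k hk]; ring
  refine ⟨hiff1, hiff1.trans ?_⟩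
  constructor
  · intro h X' hX'
    have hk : L (X' - X) = 0 := by rw [map_sub, hX', hX, sub_self]
    have hz := h (X' - X) hk
    have hexp := Q_expand K γ hγ X X (X' - X)
    rw [show X + (X' - X) = X' from by abel] at hexp
    rw [hexp, hz]
    have hnn := Q_nonneg K γ hγ X (X' - X)
    linarith
  · intro h k hk
    set c := (inner ℝ (Wop n K γ X X) k : ℝ) with hc
    set q := Q n K γ X k with hqdef
    have hq : 0 ≤ q := Q_nonneg K γ hγ X k
    have hall : ∀ t : ℝ, 0 ≤ 2 * (t * c) + t ^ 2 * q := by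
      intro t
      have hfeas : L (X + t • k) = y := by
        rw [map_add, LinearMap.map_smul, hk, smul_zero, add_zero, hX]
      have hmin := h (X + t • k) hfeas
      rw [Q_expand K γ hγ X X (t • k), Q_smul, real_inner_smul_right] at hmin
      linarith
    have hq1 : (0:ℝ) < q + 1 := by linarith
    have h2 := hall (-(c / (q + 1)))
    have hkey : c ^ 2 * (q + 2) ≤ 0 := by
      have e3 : 2 * (-(c / (q + 1)) * c) + (-(c / (q + 1))) ^ 2 * q
          = -(c ^ 2 * (q + 2)) / (q + 1) ^ 2 := by
        field_simp
        ring
      rw [e3, le_div_iff₀ (by positivity)] at h2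
      rw [zero_mul] at h2
      linarith
    have hc2 : c ^ 2 = 0 := le_antisymm (by nlinarith) (sq_nonneg c)
    have : c = 0 := by
      have := pow_eq_zero_iff (n := 2) (by norm_num) |>.1 hc2
      exact this
    exact this

end
end

section
/- Let X_γ ∈ ℝ^{n_1×⋯×n_d} for γ > 0 be a family with X_γ → X̄ as γ ↘ 0, and suppose that for every J ∈ K and every index i > rank(X̄^{[J]}), σ_i^{(J)}(X_γ)² / γ → 0 as γ ↘ 0. Then ∑_{J∈K} ∑_{i=1}^{n_J} σ_i^{(J)}(X_γ)² / (σ_i^{(J)}(X_γ)² + γ) → ∑_{J∈K} rank(X̄^{[J]}) as γ ↘ 0. -/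
open scoped BigOperators
open Matrix

noncomputable section

section Auxiliary
open Polynomial Filter

-- generic list fold lemma
theorem list_prod_getD {M : Type*} [CommMonoid M] (l : List ℝ) (f : ℝ → M) :
    ∏ j ∈ Finset.range l.length, f (l.getD j 0) = (l.map f).prod := by
  induction l with
  | nil => simp
  | cons a t ih =>
    rw [List.length_cons, Finset.prod_range_succ', List.map_cons, List.prod_cons]
    simp only [List.getD_cons_succ, List.getD_cons_zero, ih]
    exact mul_comm _ _


theorem det_add_smul_one {m : Type*} [Fintype m] [DecidableEq m] (M : Matrix m m ℝ) (hM : M.IsHermitian) (t : ℝ) :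
    (M + t • 1).det = ∏ i, (hM.eigenvalues i + t) := by
  have hU : (hM.eigenvectorUnitary : Matrix m m ℝ) * (star (hM.eigenvectorUnitary : Matrix m m ℝ)) = 1 :=
    (Matrix.mem_unitaryGroup_iff).mp hM.eigenvectorUnitary.2
  have hD : (diagonal fun i => hM.eigenvalues i + t)
      = diagonal (RCLike.ofReal ∘ hM.eigenvalues) + t • (1 : Matrix m m ℝ) := by
    rw [smul_one_eq_diagonal, ← diagonal_add]
    simp [Function.comp]
  have h1 : M + t • 1 = (hM.eigenvectorUnitary : Matrix m m ℝ) *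
      (diagonal (fun i => hM.eigenvalues i + t)) * (star (hM.eigenvectorUnitary : Matrix m m ℝ)) := by
    rw [hD, mul_add, add_mul, ← Unitary.conjStarAlgAut_apply (S := ℝ), ← hM.spectral_theorem, mul_smul_comm, mul_one, smul_mul_assoc, hU]
  rw [h1, det_mul_right_comm, hU, one_mul, det_diagonal]

section AuxSV
variable {m k : Type*} [Fintype m] [DecidableEq m] [Fintype k]

def Lst (A : Matrix m k ℝ) : List ℝ :=
  (((Finset.univ.val.map
        (Matrix.isHermitian_mul_conjTranspose_self A).eigenvalues).sort (· ≤ ·)).reverse)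

theorem Lst_length (A : Matrix m k ℝ) : (Lst A).length = Fintype.card m := by
  simp [Lst]

theorem Lst_coe (A : Matrix m k ℝ) : (↑(Lst A) : Multiset ℝ) =
    Finset.univ.val.map (Matrix.isHermitian_mul_conjTranspose_self A).eigenvalues := by
  simp [Lst, Multiset.coe_reverse, Multiset.sort_eq]

theorem svalsSq_nonneg (A : Matrix m k ℝ) (i : ℕ) : 0 ≤ svalsSq A i := by
  show 0 ≤ (Lst A).getD i 0
  rcases lt_or_ge i (Lst A).length with h | h
  · rw [List.getD_eq_getElem _ _ h]
    have hm : (Lst A)[i] ∈ (↑(Lst A) : Multiset ℝ) := by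
      exact_mod_cast List.getElem_mem _
    rw [Lst_coe] at hm
    obtain ⟨j, -, hj⟩ := Multiset.mem_map.mp hm
    rw [← hj]
    exact (Matrix.posSemidef_self_mul_conjTranspose A).eigenvalues_nonneg j
  · rw [List.getD_eq_default _ _ h]

theorem svalsSq_anti (A : Matrix m k ℝ) {i j : ℕ} (h : i ≤ j) :
    svalsSq A j ≤ svalsSq A i := by
  rcases lt_or_ge j (Lst A).length with hj | hj
  · rcases eq_or_lt_of_le h with rfl | hij
    · exact le_refl _
    · show (Lst A).getD j 0 ≤ (Lst A).getD i 0
      rw [List.getD_eq_getElem _ _ hj, List.getD_eq_getElem _ _ (lt_of_le_of_lt h hj)]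
      have hs : (Lst A).Pairwise (· ≥ ·) := by
        rw [Lst, List.pairwise_reverse]
        exact (Multiset.pairwise_sort _ (· ≤ ·)).imp fun h => h
      exact List.pairwise_iff_get.mp hs ⟨i, lt_of_le_of_lt h hj⟩ ⟨j, hj⟩ hij
  · have : svalsSq A j = 0 := List.getD_eq_default _ _ hj
    rw [this]; exact svalsSq_nonneg A i

theorem master (A : Matrix m k ℝ) :
    ∏ j ∈ Finset.range (Fintype.card m),
        (X + C (svalsSq A j) : ℝ[X]) =
      ∏ i : m, (X + C ((Matrix.isHermitian_mul_conjTranspose_self A).eigenvalues i)) := by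
  have h1 : ∏ j ∈ Finset.range (Fintype.card m), (X + C (svalsSq A j) : ℝ[X])
      = ((Lst A).map (fun t => (X + C t : ℝ[X]))).prod := by
    rw [← Lst_length A]; exact list_prod_getD (Lst A) (fun t => X + C t)
  have h2 : ((Lst A).map (fun t => (X + C t : ℝ[X]))).prod
      = (((↑(Lst A) : Multiset ℝ)).map (fun t => (X + C t : ℝ[X]))).prod := by
    rw [Multiset.map_coe, Multiset.prod_coe]
  rw [h1, h2, Lst_coe, Multiset.map_map]
  rfl

def esym (A : Matrix m k ℝ) (s : ℕ) : ℝ :=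
  (∏ j ∈ Finset.range (Fintype.card m), (X + C (svalsSq A j) : ℝ[X])).coeff
    (Fintype.card m - s)

theorem esym_eq_sum (A : Matrix m k ℝ) {s : ℕ} (hs : s ≤ Fintype.card m) :
    esym A s = ∑ S ∈ (Finset.range (Fintype.card m)).powersetCard s,
      ∏ j ∈ S, svalsSq A j := by
  rw [esym, Finset.prod_X_add_C_coeff _ _ (by simp [Nat.sub_le])]
  rw [Finset.card_range, Nat.sub_sub_self hs]

theorem esym_eq_sum_univ (A : Matrix m k ℝ) {s : ℕ} (hs : s ≤ Fintype.card m) :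
    esym A s = ∑ S ∈ (Finset.univ : Finset m).powersetCard s,
      ∏ i ∈ S, (Matrix.isHermitian_mul_conjTranspose_self A).eigenvalues i := by
  rw [esym, master, Finset.prod_X_add_C_coeff _ _ (by simp [Nat.sub_le])]
  rw [Finset.card_univ, Nat.sub_sub_self hs]

def nodes (N : ℕ) : Finset ℝ := (Finset.range (N + 1)).image (Nat.cast)

theorem card_nodes (N : ℕ) : (nodes N).card = N + 1 := by
  rw [nodes, Finset.card_image_of_injective _ Nat.cast_injective, Finset.card_range]

theorem eval_P (A : Matrix m k ℝ) (t : ℝ) :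
    (∏ j ∈ Finset.range (Fintype.card m), (X + C (svalsSq A j) : ℝ[X])).eval t
      = (A * Aᴴ + t • 1).det := by
  rw [master, det_add_smul_one _ (Matrix.isHermitian_mul_conjTranspose_self A), eval_prod]
  simp [add_comm]

theorem esym_eq_det_sum (A : Matrix m k ℝ) (s : ℕ) :
    esym A s = ∑ t ∈ nodes (Fintype.card m),
      (A * Aᴴ + t • 1).det *
        (Lagrange.basis (nodes (Fintype.card m)) id t).coeff (Fintype.card m - s) := by
  set P : ℝ[X] := ∏ j ∈ Finset.range (Fintype.card m), (X + C (svalsSq A j)) with hPdef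
  have hmonic : P.Monic := monic_prod_of_monic _ _ fun j _ => monic_X_add_C _
  have hdeg : P.natDegree = Fintype.card m := by
    rw [hPdef, natDegree_prod_of_monic _ _ fun j _ => monic_X_add_C _]
    simp
  have hdlt : P.degree < ((nodes (Fintype.card m)).card : ℕ) := by
    rw [card_nodes]
    exact lt_of_le_of_lt degree_le_natDegree (by exact_mod_cast Nat.lt_succ_of_le hdeg.le)
  have hinj : Set.InjOn id (nodes (Fintype.card m) : Set ℝ) := Function.injective_id.injOn
  have hP : P = Lagrange.interpolate (nodes (Fintype.card m)) id fun t => P.eval (id t) :=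
    Lagrange.eq_interpolate hinj hdlt
  have : esym A s = P.coeff (Fintype.card m - s) := rfl
  rw [this]
  conv_lhs => rw [hP]
  rw [Lagrange.interpolate_apply, finset_sum_coeff]
  refine Finset.sum_congr rfl fun t ht => ?_
  rw [coeff_C_mul, id, eval_P]

theorem tendsto_esym {ι : Type*} {l : Filter ι} {A : ι → Matrix m k ℝ}
    {Abar : Matrix m k ℝ} (h : Filter.Tendsto A l (nhds Abar)) (s : ℕ) :
    Filter.Tendsto (fun x => esym (A x) s) l (nhds (esym Abar s)) := by
  have hcont : Continuous fun B : Matrix m k ℝ => ∑ t ∈ nodes (Fintype.card m),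
      (B * Bᴴ + t • 1).det *
        (Lagrange.basis (nodes (Fintype.card m)) id t).coeff (Fintype.card m - s) := by
    refine continuous_finset_sum _ fun t _ => Continuous.mul ?_ continuous_const
    exact Continuous.matrix_det
      (Continuous.add (Continuous.matrix_mul continuous_id
        (Continuous.matrix_conjTranspose continuous_id)) continuous_const)
  have := (hcont.tendsto Abar).comp h
  simp only [Function.comp_def] at this
  simp only [esym_eq_det_sum]
  exact this
end AuxSV

theorem key {m k : Type*} [Fintype m] [DecidableEq m] [Fintype k]
    (A : ℝ → Matrix m k ℝ) (Abar : Matrix m k ℝ)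
    (hc : Filter.Tendsto A (nhdsWithin 0 (Set.Ioi 0)) (nhds Abar))
    (hsv : ∀ i : ℕ, Abar.rank ≤ i →
      Filter.Tendsto (fun γ => svalsSq (A γ) i / γ) (nhdsWithin 0 (Set.Ioi 0)) (nhds 0)) :
    Filter.Tendsto (fun γ : ℝ => ∑ i ∈ Finset.range (Fintype.card m),
        svalsSq (A γ) i / (svalsSq (A γ) i + γ)) (nhdsWithin 0 (Set.Ioi 0))
      (nhds ((Abar.rank : ℝ))) := by
  set l := nhdsWithin (0:ℝ) (Set.Ioi 0) with hl
  set r := Abar.rank with hr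
  set N := Fintype.card m with hN
  have hγpos : ∀ᶠ γ in l, (0:ℝ) < γ := eventually_mem_nhdsWithin
  have hγ0 : Filter.Tendsto (fun γ : ℝ => γ) l (nhds 0) :=
    tendsto_id.mono_left nhdsWithin_le_nhds
  -- Part A: terms with r ≤ i tend to 0
  have partA : ∀ i : ℕ, r ≤ i →
      Filter.Tendsto (fun γ => svalsSq (A γ) i / (svalsSq (A γ) i + γ)) l (nhds 0) := by
    intro i hi
    have hu := hsv i hi
    have hlim : Filter.Tendsto
        (fun γ => (svalsSq (A γ) i / γ) / (svalsSq (A γ) i / γ + 1)) l (nhds 0) := by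
      have := hu.div (hu.add (tendsto_const_nhds (x := (1:ℝ)))) (by norm_num)
      simpa [Pi.div_def] using this
    refine hlim.congr' ?_
    filter_upwards [hγpos] with γ hγ
    have hnn := svalsSq_nonneg (A γ) i
    have hd : svalsSq (A γ) i + γ ≠ 0 := by positivity
    field_simp
  rcases Nat.eq_zero_or_pos r with hr0 | hrpos
  · -- rank zero case
    have : Filter.Tendsto (fun γ : ℝ => ∑ i ∈ Finset.range N,
        svalsSq (A γ) i / (svalsSq (A γ) i + γ)) l (nhds (∑ i ∈ Finset.range N, (0:ℝ))) :=
      tendsto_finset_sum _ fun i _ => partA i (by omega)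
    simpa [hr0] using this
  · have hrN : r ≤ N := Matrix.rank_le_card_height Abar
    -- positivity of esym Abar r
    have heignn : ∀ i, 0 ≤ (Matrix.isHermitian_mul_conjTranspose_self Abar).eigenvalues i :=
      fun i => (Matrix.posSemidef_self_mul_conjTranspose Abar).eigenvalues_nonneg i
    have hcard : (Finset.univ.filter
        (fun i => (Matrix.isHermitian_mul_conjTranspose_self Abar).eigenvalues i ≠ 0)).card = r := by
      rw [← Fintype.card_subtype]
      rw [hr, ← Matrix.rank_self_mul_conjTranspose Abar]
      exact ((Matrix.isHermitian_mul_conjTranspose_self Abar).rank_eq_card_non_zero_eigs).symm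
    have hebar : 0 < esym Abar r := by
      rw [esym_eq_sum_univ Abar hrN]
      refine Finset.sum_pos' (fun S _ => Finset.prod_nonneg fun i _ => heignn i) ?_
      refine ⟨Finset.univ.filter
        (fun i => (Matrix.isHermitian_mul_conjTranspose_self Abar).eigenvalues i ≠ 0),
        Finset.mem_powersetCard.mpr ⟨Finset.subset_univ _, hcard⟩, ?_⟩
      exact Finset.prod_pos fun i hi =>
        lt_of_le_of_ne (heignn i) (Ne.symm (Finset.mem_filter.mp hi).2)
    set T : ℝ := esym Abar 1 + 1 with hT
    set B : ℝ := max T 1 with hB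
    have hBpos : (0:ℝ) < B := lt_of_lt_of_le one_pos (le_max_right _ _)
    have hTev : ∀ᶠ γ in l, esym (A γ) 1 ≤ T :=
      (tendsto_esym hc 1).eventually (eventually_le_nhds (lt_add_one _))
    have hEev : ∀ᶠ γ in l, esym Abar r / 2 ≤ esym (A γ) r :=
      (tendsto_esym hc r).eventually (eventually_ge_nhds (by linarith))
    set Cnum : ℝ := (N.choose r : ℝ) with hCnum
    have hCpos : (0:ℝ) < Cnum := by
      rw [hCnum]; exact_mod_cast Nat.choose_pos hrN
    set c' : ℝ := (esym Abar r / 2) / (Cnum * B ^ (r-1)) with hc'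
    have hDpos : (0:ℝ) < Cnum * B ^ (r-1) := by positivity
    have hc'pos : (0:ℝ) < c' := by positivity
    -- eventual lower bound on svalsSq (A γ) (r-1)
    have hlow : ∀ᶠ γ in l, c' ≤ svalsSq (A γ) (r-1) := by
      filter_upwards [hTev, hEev] with γ h1 h2
      have hBb : ∀ j, j < N → svalsSq (A γ) j ≤ B := by
        intro j hj
        have hmem : ({j} : Finset ℕ) ∈ (Finset.range N).powersetCard 1 :=
          Finset.mem_powersetCard.mpr
            ⟨Finset.singleton_subset_iff.mpr (Finset.mem_range.mpr hj), Finset.card_singleton j⟩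
        have h1' : svalsSq (A γ) j ≤ esym (A γ) 1 := by
          rw [esym_eq_sum _ (le_trans hrpos hrN)]
          have := Finset.single_le_sum
            (f := fun S => ∏ i ∈ S, svalsSq (A γ) i)
            (fun S _ => Finset.prod_nonneg fun i _ => svalsSq_nonneg (A γ) i) hmem
          simpa using this
        exact le_trans (le_trans h1' h1) (le_max_left _ _)
      have hup : esym (A γ) r ≤ Cnum * B ^ (r-1) * svalsSq (A γ) (r-1) := by
        rw [esym_eq_sum _ hrN]
        have hbd : ∀ S ∈ (Finset.range N).powersetCard r,
            ∏ j ∈ S, svalsSq (A γ) j ≤ B ^ (r-1) * svalsSq (A γ) (r-1) := by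
          intro S hS
          obtain ⟨hSsub, hScard⟩ := Finset.mem_powersetCard.mp hS
          have hne : S.Nonempty := Finset.card_pos.mp (by omega)
          set j₀ := S.max' hne with hj₀def
          have hj₀S : j₀ ∈ S := S.max'_mem hne
          have hj₀ : r - 1 ≤ j₀ := by
            have hsub : S ⊆ Finset.range (j₀+1) := fun x hx =>
              Finset.mem_range.mpr (Nat.lt_succ_of_le (S.le_max' x hx))
            have := Finset.card_le_card hsub
            rw [hScard, Finset.card_range] at this
            omega
          have hprod : ∏ j ∈ S, svalsSq (A γ) j
              = svalsSq (A γ) j₀ * ∏ j ∈ S.erase j₀, svalsSq (A γ) j :=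
            (Finset.mul_prod_erase S _ hj₀S).symm
          have herase : ∏ j ∈ S.erase j₀, svalsSq (A γ) j ≤ B ^ (r-1) := by
            have hcard' : (S.erase j₀).card = r - 1 := by
              rw [Finset.card_erase_of_mem hj₀S, hScard]
            calc ∏ j ∈ S.erase j₀, svalsSq (A γ) j ≤ ∏ _j ∈ S.erase j₀, B := by
                  refine Finset.prod_le_prod (fun i _ => svalsSq_nonneg (A γ) i) fun x hx => ?_
                  exact hBb x (Finset.mem_range.mp (hSsub (Finset.mem_of_mem_erase hx)))
              _ = B ^ (r-1) := by rw [Finset.prod_const, hcard']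
          rw [hprod]
          have h3 : svalsSq (A γ) j₀ ≤ svalsSq (A γ) (r-1) := svalsSq_anti (A γ) hj₀
          calc svalsSq (A γ) j₀ * ∏ j ∈ S.erase j₀, svalsSq (A γ) j
              ≤ svalsSq (A γ) (r-1) * B ^ (r-1) := by
                refine mul_le_mul h3 herase
                  (Finset.prod_nonneg fun i _ => svalsSq_nonneg (A γ) i)
                  (svalsSq_nonneg (A γ) (r-1))
            _ = B ^ (r-1) * svalsSq (A γ) (r-1) := mul_comm _ _
        calc ∑ S ∈ (Finset.range N).powersetCard r, ∏ j ∈ S, svalsSq (A γ) j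
            ≤ ∑ S ∈ (Finset.range N).powersetCard r, B ^ (r-1) * svalsSq (A γ) (r-1) :=
              Finset.sum_le_sum hbd
          _ = Cnum * B ^ (r-1) * svalsSq (A γ) (r-1) := by
              rw [Finset.sum_const, Finset.card_powersetCard, Finset.card_range,
                nsmul_eq_mul, hCnum]
              ring
      rw [hc', div_le_iff₀ hDpos]
      have := le_trans h2 hup
      nlinarith [svalsSq_nonneg (A γ) (r-1)]
    -- Part B: terms with i < r tend to 1
    have partB : ∀ i : ℕ, i < r →
        Filter.Tendsto (fun γ => svalsSq (A γ) i / (svalsSq (A γ) i + γ)) l (nhds 1) := by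
      intro i hi
      have hglim : Filter.Tendsto (fun γ : ℝ => 1 - γ / c') l (nhds 1) := by
        have := (tendsto_const_nhds (x := (1:ℝ)) (f := l)).sub (hγ0.div_const c')
        simpa using this
      refine tendsto_of_tendsto_of_tendsto_of_le_of_le' hglim tendsto_const_nhds ?_ ?_
      · filter_upwards [hlow, hγpos] with γ hlo hg
        have hi' : c' ≤ svalsSq (A γ) i :=
          le_trans hlo (svalsSq_anti (A γ) (by omega))
        have hd : 0 < svalsSq (A γ) i + γ := by
          have := svalsSq_nonneg (A γ) i; linarith
        have hkey : svalsSq (A γ) i / (svalsSq (A γ) i + γ)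
            = 1 - γ / (svalsSq (A γ) i + γ) := by
          field_simp
          ring
        rw [hkey]
        have hcc : γ / (svalsSq (A γ) i + γ) ≤ γ / c' := by
          apply div_le_div_of_nonneg_left hg.le hc'pos
          linarith
        linarith
      · filter_upwards [hγpos] with γ hg
        have hd : 0 < svalsSq (A γ) i + γ := by
          have := svalsSq_nonneg (A γ) i; linarith
        rw [div_le_one hd]
        linarith
    -- assemble
    have hsum : Filter.Tendsto (fun γ : ℝ =>
        (∑ i ∈ Finset.range r, svalsSq (A γ) i / (svalsSq (A γ) i + γ)) +
        ∑ i ∈ Finset.Ico r N, svalsSq (A γ) i / (svalsSq (A γ) i + γ)) l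
        (nhds ((∑ _i ∈ Finset.range r, (1:ℝ)) + ∑ _i ∈ Finset.Ico r N, (0:ℝ))) := by
      refine Filter.Tendsto.add ?_ ?_
      · exact tendsto_finset_sum _ fun i hi => partB i (Finset.mem_range.mp hi)
      · exact tendsto_finset_sum _ fun i hi => partA i (Finset.mem_Ico.mp hi).1
    have heq : ∀ γ : ℝ, (∑ i ∈ Finset.range N, svalsSq (A γ) i / (svalsSq (A γ) i + γ))
        = (∑ i ∈ Finset.range r, svalsSq (A γ) i / (svalsSq (A γ) i + γ)) +
          ∑ i ∈ Finset.Ico r N, svalsSq (A γ) i / (svalsSq (A γ) i + γ) := by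
      intro γ
      rw [Finset.range_eq_Ico, ← Finset.sum_Ico_consecutive _ (Nat.zero_le r) hrN,
        ← Finset.range_eq_Ico]
    have hval : ((r : ℝ)) = (∑ _i ∈ Finset.range r, (1:ℝ)) + ∑ _i ∈ Finset.Ico r N, (0:ℝ) := by
      simp
    rw [hval]
    exact hsum.congr (fun γ => (heq γ).symm)

end Auxiliary

/-- if `X_γ → X̄` as `γ ↘ 0` and for every `J ∈ K` the singular
values of `X_γ^{[J]}` beyond the rank of `X̄^{[J]}` decline faster than `√γ`
(i.e. `σ_i^{(J)}(X_γ)²/γ → 0` for `i > rank X̄^{[J]}`), then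
`∑_{J∈K} ∑_{i=1}^{n_J} σ_i^{(J)}(X_γ)²/(σ_i^{(J)}(X_γ)² + γ) → ∑_{J∈K} rank(X̄^{[J]})`.
(Singular values are 0-indexed here, so "`i > rank`" reads "`rank ≤ i`".) -/
theorem tendsto_weighted_sum_rank {d : ℕ} (n : Fin d → ℕ)
    (K : Finset (Finset (Fin d)))
    (hK : ∀ J ∈ K, J.Nonempty ∧ J ≠ Finset.univ)
    (Xg : ℝ → Tensor d n) (Xbar : Tensor d n)
    (hlim : Filter.Tendsto Xg (nhdsWithin 0 (Set.Ioi 0)) (nhds Xbar))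
    (hsv : ∀ J ∈ K, ∀ i : ℕ, (mat n Xbar J).rank ≤ i →
      Filter.Tendsto (fun γ : ℝ => svalsSq (mat n (Xg γ) J) i / γ)
        (nhdsWithin 0 (Set.Ioi 0)) (nhds 0)) :
    Filter.Tendsto
      (fun γ : ℝ => ∑ J ∈ K, ∑ i ∈ Finset.range (nS n J),
        svalsSq (mat n (Xg γ) J) i / (svalsSq (mat n (Xg γ) J) i + γ))
      (nhdsWithin 0 (Set.Ioi 0))
      (nhds (∑ J ∈ K, ((mat n Xbar J).rank : ℝ))) := by
  refine tendsto_finset_sum K fun J hJ => ?_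
  have hcard : nS n J = Fintype.card (∀ μ : {μ : Fin d // μ ∈ J}, Fin (n μ.1)) := by
    rw [Fintype.card_pi]
    simp only [Fintype.card_fin, nS]
    exact (Finset.prod_attach J n).symm
  have hcontmat : Continuous (fun X : Tensor d n => mat n X J) := by
    refine continuous_matrix fun a b => ?_
    exact PiLp.continuous_apply 2 _ _
  have hmat : Filter.Tendsto (fun γ => mat n (Xg γ) J)
      (nhdsWithin 0 (Set.Ioi 0)) (nhds (mat n Xbar J)) :=
    (hcontmat.tendsto Xbar).comp hlim
  simp only [hcard]
  exact key _ _ hmat (fun i hi => hsv J hJ i hi)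

end
end
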